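/- Let p and ℓ be distinct primes with ℓ dividing p+1, and let k be a field of characteristic ℓ. Let X = P^1(F_p) be the projective line over F_p (the set of lines through the origin in F_p^2), on which G = GL_2(F_p) acts via its action on F_p^2, and let M = Maps(X, k) with G acting by (g·f)(x) = f(g^{-1}·x). Let V_0 = { f ∈ M : Σ_{x∈X} f(x) = 0 }. Then: (1) V_0 is a G-stable subspace of M containing the constant functions (since |X| = p+1 ≡ 0 in k); (2) the quotient W = V_0 / (constant functions) has dimension p−1 over k; and (3) the subspace of W fixed by the group U of upper-triangular unipotent matrices in GL_2(F_p) is zero (so W is a cuspidal subrepresentation of the Steinberg representation M/constants). -/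
import Mathlib

/-- The action of `GL₂(F_p)` on the projective line `ℙ¹(F_p)` (the space of lines through the
origin in `F_p²`), induced by the linear action on `F_p²`. -/
noncomputable def glProjAct (p : ℕ) [Fact p.Prime] (g : GL (Fin 2) (ZMod p)) :
    Projectivization (ZMod p) (Fin 2 → ZMod p) →
      Projectivization (ZMod p) (Fin 2 → ZMod p) :=
  Projectivization.map
    ((Matrix.GeneralLinearGroup.toLin g).toLinearEquiv.toLinearMap)
    (Matrix.GeneralLinearGroup.toLin g).toLinearEquiv.injective

/-- The action of `g ∈ GL₂(F_p)` on `k`-valued functions on `ℙ¹(F_p)`: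
`(g • f)(x) = f (g⁻¹ • x)`. -/
noncomputable def projFnAct (p : ℕ) [Fact p.Prime] (k : Type) [Field k]
    (g : GL (Fin 2) (ZMod p)) (f : Projectivization (ZMod p) (Fin 2 → ZMod p) → k) :
    Projectivization (ZMod p) (Fin 2 → ZMod p) → k :=
  fun x => f (glProjAct p g⁻¹ x)

/-- The subspace `V₀` of functions on `ℙ¹(F_p)` whose values sum to zero. -/
noncomputable def sumZeroFns (p : ℕ) [Fact p.Prime] (k : Type) [Field k]
    [Fintype (Projectivization (ZMod p) (Fin 2 → ZMod p))] :
    Submodule k (Projectivization (ZMod p) (Fin 2 → ZMod p) → k) where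
  carrier := {f | ∑ x, f x = 0}
  add_mem' := by
    intro f g hf hg
    simp only [Set.mem_setOf_eq, Pi.add_apply, Finset.sum_add_distrib] at *
    rw [hf, hg, add_zero]
  zero_mem' := by simp
  smul_mem' := by
    intro c f hf
    simp only [Set.mem_setOf_eq, Pi.smul_apply, smul_eq_mul, ← Finset.mul_sum] at *
    rw [hf, mul_zero]

/-- The subspace of constant functions on `ℙ¹(F_p)`. -/
noncomputable def constFns (p : ℕ) [Fact p.Prime] (k : Type) [Field k] :
    Submodule k (Projectivization (ZMod p) (Fin 2 → ZMod p) → k) :=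
  Submodule.span k {fun _ => (1 : k)}

section AUX

variable (p : ℕ) [Fact p.Prime]

lemma AUXmulVec_ne_zero (g : GL (Fin 2) (ZMod p)) (v : Fin 2 → ZMod p) (hv : v ≠ 0) :
    (↑g : Matrix (Fin 2) (Fin 2) (ZMod p)).mulVec v ≠ 0 := by
  intro h
  apply hv
  have := congrArg ((↑g⁻¹ : Matrix (Fin 2) (Fin 2) (ZMod p)).mulVec) h
  rwa [Matrix.mulVec_mulVec, Units.inv_mul, Matrix.one_mulVec, Matrix.mulVec_zero] at this

lemma AUXglProjAct_mk (g : GL (Fin 2) (ZMod p)) (v : Fin 2 → ZMod p) (hv : v ≠ 0)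
    (w : Fin 2 → ZMod p) (hw : w ≠ 0)
    (h : (↑g : Matrix (Fin 2) (Fin 2) (ZMod p)).mulVec v = w) :
    glProjAct p g (Projectivization.mk _ v hv) = Projectivization.mk _ w hw := by
  subst h; rfl

lemma AUXglProjAct_inv_comp (g : GL (Fin 2) (ZMod p)) (x) :
    glProjAct p g⁻¹ (glProjAct p g x) = x := by
  induction x using Projectivization.ind with
  | h v hv =>
    rw [AUXglProjAct_mk p g v hv _ (AUXmulVec_ne_zero p g v hv) rfl,
      AUXglProjAct_mk p g⁻¹ _ _ _ hv]
    rw [Matrix.mulVec_mulVec, Units.inv_mul, Matrix.one_mulVec]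

noncomputable def AUXglEquiv (g : GL (Fin 2) (ZMod p)) :
    Projectivization (ZMod p) (Fin 2 → ZMod p) ≃ Projectivization (ZMod p) (Fin 2 → ZMod p) where
  toFun := glProjAct p g
  invFun := glProjAct p g⁻¹
  left_inv := AUXglProjAct_inv_comp p g
  right_inv := by
    intro x
    have := AUXglProjAct_inv_comp p g⁻¹ x
    rwa [inv_inv] at this

/-- the affine point `[a : 1]` -/
noncomputable def AUXptA (a : ZMod p) : Projectivization (ZMod p) (Fin 2 → ZMod p) :=
  Projectivization.mk _ ![a, 1] (by
    intro h
    have := congrFun h 1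
    simp at this)

/-- the point at infinity `[1 : 0]` -/
noncomputable def AUXptInf : Projectivization (ZMod p) (Fin 2 → ZMod p) :=
  Projectivization.mk _ ![1, 0] (by
    intro h
    have := congrFun h 0
    simp at this)

noncomputable def AUXe : Option (ZMod p) ≃ Projectivization (ZMod p) (Fin 2 → ZMod p) := by
  refine Equiv.ofBijective (fun o => o.elim (AUXptInf p) (AUXptA p)) ⟨?_, ?_⟩
  · rintro (_|a) (_|b) h
    · rfl
    · exfalso
      simp only [Option.elim, AUXptInf, AUXptA] at h
      rw [Projectivization.mk_eq_mk_iff'] at h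
      obtain ⟨c, hc⟩ := h
      have h1 := congrFun hc 1
      have h0 := congrFun hc 0
      simp only [Pi.smul_apply, smul_eq_mul, Matrix.cons_val_one, Matrix.head_cons, mul_one,
        Matrix.cons_val_zero] at h1 h0
      subst h1
      simp at h0
    · exfalso
      simp only [Option.elim, AUXptInf, AUXptA] at h
      rw [Projectivization.mk_eq_mk_iff'] at h
      obtain ⟨c, hc⟩ := h
      have := congrFun hc 1
      simp at this
    · simp only [Option.elim, AUXptA] at h
      rw [Projectivization.mk_eq_mk_iff'] at h
      obtain ⟨c, hc⟩ := h
      have h1 := congrFun hc 1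
      have h0 := congrFun hc 0
      simp only [Pi.smul_apply, smul_eq_mul] at h1 h0
      simp only [Matrix.cons_val_one, Matrix.head_cons, mul_one, Matrix.cons_val_zero] at h1 h0
      subst h1
      simp only [one_mul] at h0
      rw [h0]
  · intro x
    induction x using Projectivization.ind with
    | h v hv =>
      by_cases h1 : v 1 = 0
      · refine ⟨none, Eq.symm ?_⟩
        simp only [Option.elim, AUXptInf]
        rw [Projectivization.mk_eq_mk_iff']
        refine ⟨v 0, funext fun i => ?_⟩
        fin_cases i <;> simp [h1]
      · refine ⟨some (v 0 / v 1), Eq.symm ?_⟩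
        simp only [Option.elim, AUXptA]
        rw [Projectivization.mk_eq_mk_iff']
        refine ⟨v 1, funext fun i => ?_⟩
        fin_cases i <;> simp [mul_div_cancel₀ _ h1]

/-- the unipotent element `[[1, b], [0, 1]]` of `GL₂(F_p)` -/
def AUXu (b : ZMod p) : GL (Fin 2) (ZMod p) :=
  ⟨!![1, b; 0, 1], !![1, -b; 0, 1],
    by ext i j; fin_cases i <;> fin_cases j <;>
      simp [Matrix.mul_apply, Fin.sum_univ_two, Matrix.one_apply],
    by ext i j; fin_cases i <;> fin_cases j <;>
      simp [Matrix.mul_apply, Fin.sum_univ_two, Matrix.one_apply]⟩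

lemma AUXact_inf (b : ZMod p) : glProjAct p (AUXu p b)⁻¹ (AUXptInf p) = AUXptInf p := by
  refine AUXglProjAct_mk p _ _ _ _ _ ?_
  show (!![1, -b; 0, 1]).mulVec ![1, 0] = ![1, 0]
  funext i; fin_cases i <;> simp [Matrix.mulVec, dotProduct, Fin.sum_univ_two]

lemma AUXact_a (a b : ZMod p) :
    glProjAct p (AUXu p b)⁻¹ (AUXptA p a) = AUXptA p (a - b) := by
  refine AUXglProjAct_mk p _ _ _ _ _ ?_
  show (!![1, -b; 0, 1]).mulVec ![a, 1] = ![a - b, 1]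
  funext i; fin_cases i <;>
    simp [Matrix.mulVec, dotProduct, Fin.sum_univ_two, sub_eq_add_neg]

end AUX

set_option maxHeartbeats 1000000 in
set_option synthInstance.maxHeartbeats 400000 in
theorem AUXmain (p ℓ : ℕ) [Fact p.Prime] (hℓ : ℓ.Prime) (hℓp : ℓ ≠ p) (hdvd : ℓ ∣ p + 1)
    (k : Type) [Field k]
    [instX : Fintype (Projectivization (ZMod p) (Fin 2 → ZMod p))] [CharP k ℓ] :
    Nat.card (Projectivization (ZMod p) (Fin 2 → ZMod p)) = p + 1 ∧
    (∀ (g : GL (Fin 2) (ZMod p)) (f : Projectivization (ZMod p) (Fin 2 → ZMod p) → k),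
      f ∈ sumZeroFns p k → projFnAct p k g f ∈ sumZeroFns p k) ∧
    (∀ c : k, (fun _ => c) ∈ sumZeroFns p k) ∧
    Module.finrank k
      (sumZeroFns p k ⧸
        Submodule.comap (sumZeroFns p k).subtype (constFns p k)) = p - 1 ∧
    (∀ f : Projectivization (ZMod p) (Fin 2 → ZMod p) → k, f ∈ sumZeroFns p k →
      (∀ u : GL (Fin 2) (ZMod p),
        (∀ i j : Fin 2, j ≤ i →
          (u : Matrix (Fin 2) (Fin 2) (ZMod p)) i j =
            (1 : Matrix (Fin 2) (Fin 2) (ZMod p)) i j) →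
        projFnAct p k u f - f ∈ constFns p k) →
      f ∈ constFns p k) := by
  classical
  have hcard : Fintype.card (Projectivization (ZMod p) (Fin 2 → ZMod p)) = p + 1 := by
    rw [← Fintype.card_congr (AUXe p), Fintype.card_option, ZMod.card]
  have hp1 : ((p : k) + 1) = 0 := by
    have : (((p + 1 : ℕ)) : k) = 0 := (CharP.cast_eq_zero_iff k ℓ (p + 1)).2 hdvd
    push_cast at this
    exact this
  have hmem : ∀ f : Projectivization (ZMod p) (Fin 2 → ZMod p) → k,
      f ∈ sumZeroFns p k ↔ ∑ x, f x = 0 := fun f => Iff.rfl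
  have hconstmem : ∀ c : k, (fun _ => c) ∈ sumZeroFns p k := by
    intro c
    rw [hmem]
    rw [Finset.sum_const, Finset.card_univ, hcard, nsmul_eq_mul]
    push_cast
    rw [hp1, zero_mul]
  refine ⟨?_, ?_, hconstmem, ?_, ?_⟩
  · rw [Nat.card_eq_fintype_card, hcard]
  · intro g f hf
    rw [hmem] at hf ⊢
    exact (Equiv.sum_comp (AUXglEquiv p g⁻¹) f).trans hf
  · -- dimension count
    have hle : constFns p k ≤ sumZeroFns p k := by
      rw [constFns]
      exact Submodule.span_le.2 (Set.singleton_subset_iff.2 (hconstmem 1))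
    let S : (Projectivization (ZMod p) (Fin 2 → ZMod p) → k) →ₗ[k] k :=
      { toFun := fun f => ∑ x, f x
        map_add' := by intro f g; simp [Finset.sum_add_distrib]
        map_smul' := by intro c f; simp [Finset.mul_sum] }
    have hker : sumZeroFns p k = LinearMap.ker S := Submodule.ext fun f => Iff.rfl
    have hsurj : Function.Surjective S := by
      intro c
      refine ⟨Pi.single (AUXptInf p) c, ?_⟩
      show ∑ x, Pi.single (AUXptInf p) c x = c
      rw [Finset.sum_pi_single']
      simp
    have hrange : LinearMap.range S = ⊤ := LinearMap.range_eq_top.2 hsurj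
    have hrk := LinearMap.finrank_range_add_finrank_ker S
    rw [hrange, finrank_top, Module.finrank_self, Module.finrank_fintype_fun_eq_card,
      hcard, ← hker] at hrk
    have hV0 : Module.finrank k (sumZeroFns p k) = p := by omega
    have hsub : Module.finrank k
        (Submodule.comap (sumZeroFns p k).subtype (constFns p k)) = 1 := by
      rw [LinearEquiv.finrank_eq (Submodule.comapSubtypeEquivOfLe hle)]
      refine finrank_span_singleton ?_
      intro h
      have := congrFun h (AUXptInf p)
      simp at this
    have hq := Submodule.finrank_quotient_add_finrank
      (Submodule.comap (sumZeroFns p k).subtype (constFns p k))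
    rw [hsub, hV0] at hq
    omega
  · -- cuspidality
    intro f hf hU
    have key : ∀ b : ZMod p, projFnAct p k (AUXu p b) f = f := by
      intro b
      have h1 := hU (AUXu p b) (by
        intro i j hij
        fin_cases i <;> fin_cases j <;> simp_all [AUXu, Matrix.one_apply])
      rw [constFns, Submodule.mem_span_singleton] at h1
      obtain ⟨c, hc⟩ := h1
      have h2 := congrFun hc (AUXptInf p)
      have h3 : projFnAct p k (AUXu p b) f (AUXptInf p) = f (AUXptInf p) := by
        show f (glProjAct p (AUXu p b)⁻¹ (AUXptInf p)) = f (AUXptInf p)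
        rw [AUXact_inf]
      simp only [Pi.smul_apply, smul_eq_mul, mul_one, Pi.sub_apply, h3, sub_self] at h2
      have h4 : projFnAct p k (AUXu p b) f - f = 0 := by
        rw [← hc, h2, zero_smul]
      exact sub_eq_zero.1 h4
    have hA : ∀ a : ZMod p, f (AUXptA p a) = f (AUXptA p 0) := by
      intro a
      have := congrFun (key a) (AUXptA p a)
      have h3 : projFnAct p k (AUXu p a) f (AUXptA p a) = f (AUXptA p 0) := by
        show f (glProjAct p (AUXu p a)⁻¹ (AUXptA p a)) = f (AUXptA p 0)
        rw [AUXact_a, sub_self]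
      rw [h3] at this
      exact this.symm
    have hsum : ∑ x, f x = 0 := (hmem f).1 hf
    rw [← Equiv.sum_comp (AUXe p) f, Fintype.sum_option] at hsum
    have hAe : ∀ a : ZMod p, f (AUXe p (some a)) = f (AUXptA p 0) := fun a => hA a
    have hIe : f (AUXe p none) = f (AUXptInf p) := rfl
    rw [hIe, Finset.sum_congr rfl (fun a _ => hAe a), Finset.sum_const, Finset.card_univ,
      ZMod.card, nsmul_eq_mul] at hsum
    have hpk : (p : k) = -1 := by linear_combination hp1
    rw [hpk] at hsum
    have hinf : f (AUXptInf p) = f (AUXptA p 0) := by linear_combination hsum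
    rw [constFns, Submodule.mem_span_singleton]
    refine ⟨f (AUXptA p 0), ?_⟩
    funext x
    obtain ⟨o, rfl⟩ := (AUXe p).surjective x
    match o with
    | none =>
      show f (AUXptA p 0) * 1 = f (AUXe p none)
      rw [mul_one, hIe, hinf]
    | some a =>
      show f (AUXptA p 0) * 1 = f (AUXe p (some a))
      rw [mul_one, hAe a]

/-- Let `p ≠ ℓ` be primes with `ℓ ∣ p + 1` and `k` a field of characteristic
`ℓ`. Consider `G = GL₂(F_p)` acting on `M = Maps(ℙ¹(F_p), k)` by `(g·f)(x) = f(g⁻¹x)`, and let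
`V₀ = {f : ∑ f(x) = 0}`. Then `ℙ¹(F_p)` has `p+1` elements, `V₀` is `G`-stable and contains
the constants, the quotient `W = V₀/constants` has dimension `p - 1`, and the subspace of `W`
fixed by the upper-triangular unipotent subgroup `U` is zero (the class of `f ∈ V₀` is
`U`-fixed iff `u·f - f` is constant for all `u ∈ U`). -/
theorem steinberg_mod_ell_cuspidal_constituent
    (p ℓ : ℕ) [Fact p.Prime] (hℓ : ℓ.Prime) (hℓp : ℓ ≠ p) (hdvd : ℓ ∣ p + 1)
    (k : Type) [Field k] [CharP k ℓ] :
    letI : Finite (Projectivization (ZMod p) (Fin 2 → ZMod p)) :=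
      (Quotient.finite (projectivizationSetoid (ZMod p) (Fin 2 → ZMod p)))
    letI : Fintype (Projectivization (ZMod p) (Fin 2 → ZMod p)) := Fintype.ofFinite _
    Nat.card (Projectivization (ZMod p) (Fin 2 → ZMod p)) = p + 1 ∧
    (∀ (g : GL (Fin 2) (ZMod p)) (f : Projectivization (ZMod p) (Fin 2 → ZMod p) → k),
      f ∈ sumZeroFns p k → projFnAct p k g f ∈ sumZeroFns p k) ∧
    (∀ c : k, (fun _ => c) ∈ sumZeroFns p k) ∧
    Module.finrank k
      (sumZeroFns p k ⧸
        Submodule.comap (sumZeroFns p k).subtype (constFns p k)) = p - 1 ∧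
    (∀ f : Projectivization (ZMod p) (Fin 2 → ZMod p) → k, f ∈ sumZeroFns p k →
      (∀ u : GL (Fin 2) (ZMod p),
        (∀ i j : Fin 2, j ≤ i →
          (u : Matrix (Fin 2) (Fin 2) (ZMod p)) i j =
            (1 : Matrix (Fin 2) (Fin 2) (ZMod p)) i j) →
        projFnAct p k u f - f ∈ constFns p k) →
      f ∈ constFns p k) := by
  letI : Finite (Projectivization (ZMod p) (Fin 2 → ZMod p)) :=
    (Quotient.finite (projectivizationSetoid (ZMod p) (Fin 2 → ZMod p)))
  exact AUXmain (instX := Fintype.ofFinite _) p ℓ hℓ hℓp hdvd k
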